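/- For every real α, -(1/4) Σ_{k=1}^∞ (k+1) (-1)^k ((2k-1)!!/(k!)²) (α²/2)^k = 1/4 + (1/8) e^{-α²/2} [(α² - 2) I₀(α²/2) - α² I₁(α²/2)]. -/
import Mathlib


open Real Filter

/-- Modified Bessel function of the first kind (integer order), via its power series. -/
noncomputable def besselI (ν : ℕ) (x : ℝ) : ℝ :=
  ∑' k : ℕ, (x/2)^(2*k+ν) / ((Nat.factorial k : ℝ) * (Nat.factorial (k+ν) : ℝ))

/-- The odd double factorial (2k-1)!! = (2k)!/(2^k k!), with (-1)!! = 1. -/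
noncomputable def oddDF (k : ℕ) : ℝ := (Nat.factorial (2*k) : ℝ) / (2^k * (Nat.factorial k : ℝ))

namespace D1Aux

open Finset Polynomial

/-! ### Combinatorial identities via polynomial coefficients -/

lemma coeff_one_add_X_sq_pow (m s : ℕ) :
    ((1 + X ^ 2 : Polynomial ℕ) ^ m).coeff s
      = if s % 2 = 0 ∧ s / 2 ≤ m then m.choose (s / 2) else 0 := by
  rw [add_comm, add_pow]
  rw [finset_sum_coeff]
  have h : ∀ i ∈ range (m + 1),
      (((X : Polynomial ℕ) ^ 2) ^ i * 1 ^ (m - i) * (m.choose i : Polynomial ℕ)).coeff s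
        = if s = 2 * i then m.choose i else 0 := by
    intro i _
    rw [one_pow, mul_one, ← pow_mul, ← C_eq_natCast, coeff_mul_C, coeff_X_pow]
    split_ifs <;> simp
  rw [Finset.sum_congr rfl h]
  by_cases hs : s % 2 = 0 ∧ s / 2 ≤ m
  · rw [if_pos hs]
    rw [Finset.sum_eq_single (s / 2)]
    · rw [if_pos (by omega)]
    · intro i _ hi; rw [if_neg (by omega)]
    · intro hmem; exact absurd (mem_range.2 (by omega)) hmem
  · rw [if_neg hs]
    apply Finset.sum_eq_zero
    intro i hi
    rw [if_neg]
    intro h'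
    exact hs ⟨by omega, by simp only [mem_range] at hi; omega⟩

lemma key_expand (n : ℕ) :
    ((1 + X : Polynomial ℕ)) ^ (2 * n)
      = ∑ k ∈ range (n + 1),
          (2 * X) ^ k * (1 + X ^ 2) ^ (n - k) * (n.choose k : Polynomial ℕ) := by
  have h2 : ((1 + X : Polynomial ℕ)) ^ 2 = 2 * X + (1 + X ^ 2) := by ring
  rw [pow_mul, h2, add_pow]

lemma key_coeff (n r : ℕ) :
    (2 * n).choose r = ∑ k ∈ range (n + 1),
      2 ^ k * n.choose k *
        (if k ≤ r then
          (if (r - k) % 2 = 0 ∧ (r - k) / 2 ≤ n - k then (n - k).choose ((r - k) / 2) else 0)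
         else 0) := by
  have h := congrArg (fun p : Polynomial ℕ => p.coeff r) (key_expand n)
  simp only [coeff_one_add_X_pow, Nat.cast_id] at h
  rw [h, finset_sum_coeff]
  refine Finset.sum_congr rfl fun k _ => ?_
  have hterm : ((2 * X : Polynomial ℕ)) ^ k * (1 + X ^ 2) ^ (n - k) * (n.choose k : Polynomial ℕ)
      = C (2 ^ k * n.choose k) * ((1 + X ^ 2) ^ (n - k) * X ^ k) := by
    rw [mul_pow, ← C_eq_natCast, map_mul, map_pow]
    have h2 : (C 2 : Polynomial ℕ) = 2 := by simp
    rw [h2]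
    norm_cast
    ring
  rw [hterm, coeff_C_mul, coeff_mul_X_pow', coeff_one_add_X_sq_pow]

def g0 (n k : ℕ) : ℕ :=
  if (n - k) % 2 = 0 then 2 ^ k * n.choose k * (n - k).choose ((n - k) / 2) else 0

def g1 (n k : ℕ) : ℕ :=
  if (n - k) % 2 = 1 then 2 ^ k * n.choose k * (n - k).choose ((n - k) / 2) else 0

lemma E0 (n : ℕ) : ∑ k ∈ range (n + 1), g0 n k = (2 * n).choose n := by
  rw [key_coeff n n]
  refine Finset.sum_congr rfl fun k hk => ?_
  have hk' : k ≤ n := by simp only [mem_range] at hk; omega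
  unfold g0
  rw [if_pos hk']
  by_cases h : (n - k) % 2 = 0
  · rw [if_pos h, if_pos ⟨h, Nat.div_le_self _ _⟩]
  · rw [if_neg h, if_neg (by tauto), mul_zero]

lemma E1 (n : ℕ) : ∑ k ∈ range (n + 1), g1 n k = (2 * n).choose (n + 1) := by
  rw [key_coeff n (n + 1)]
  refine Finset.sum_congr rfl fun k hk => ?_
  have hk' : k ≤ n := by simp only [mem_range] at hk; omega
  unfold g1
  rw [if_pos (by omega : k ≤ n + 1)]
  by_cases h : (n - k) % 2 = 1
  · have h1 : (n + 1 - k) / 2 = (n - k) / 2 + 1 := by omega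
    have h2 : (n - k) - ((n - k) / 2 + 1) = (n - k) / 2 := by omega
    have h3 : (n - k).choose ((n - k) / 2) = (n - k).choose ((n - k) / 2 + 1) := by
      conv_lhs => rw [← h2]
      exact Nat.choose_symm (by omega)
    rw [if_pos h, if_pos (by omega : (n + 1 - k) % 2 = 0 ∧ (n + 1 - k) / 2 ≤ n - k), h1, h3]
  · rw [if_neg h, if_neg (by omega), mul_zero]

/-! ### Real coefficient sequences -/

noncomputable def p0 (n : ℕ) : ℝ :=
  if n % 2 = 0 then 1 / (2 ^ n * (Nat.factorial (n / 2) : ℝ) ^ 2) else 0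

noncomputable def p1 (n : ℕ) : ℝ :=
  if n % 2 = 1 then
    1 / (2 ^ n * (Nat.factorial (n / 2) : ℝ) * (Nat.factorial (n / 2 + 1) : ℝ)) else 0

noncomputable def cc (n : ℕ) : ℝ :=
  (Nat.factorial (2 * n) : ℝ) / (2 ^ n * (Nat.factorial n : ℝ) ^ 3)

noncomputable def aa (n : ℕ) : ℝ := (-1) ^ n * cc n

noncomputable def bb (n : ℕ) : ℝ :=
  (-1) ^ (n + 1) * (Nat.choose (2 * n) (n + 1) : ℝ) / (2 ^ n * (Nat.factorial n : ℝ))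

lemma p0_two_mul (k : ℕ) : p0 (2 * k) = 1 / (2 ^ (2 * k) * (Nat.factorial k : ℝ) ^ 2) := by
  unfold p0
  rw [if_pos (by omega), Nat.mul_div_cancel_left _ (by norm_num)]

lemma p1_two_mul (k : ℕ) :
    p1 (2 * k + 1) = 1 / (2 ^ (2 * k + 1) * (Nat.factorial k : ℝ) * (Nat.factorial (k + 1) : ℝ)) := by
  have h : (2 * k + 1) / 2 = k := by omega
  unfold p1
  rw [if_pos (by omega), h]

lemma besselI0_eq (t : ℝ) : besselI 0 t = ∑' n : ℕ, p0 n * t ^ n := by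
  unfold besselI
  rw [← Function.Injective.tsum_eq (g := fun k : ℕ => 2 * k)
      (fun a b h => by simp only at h; omega) (f := fun n => p0 n * t ^ n)]
  · refine tsum_congr fun k => ?_
    rw [p0_two_mul, div_pow, Nat.add_zero]
    ring
  · intro n hn
    rcases Nat.even_or_odd n with he | ho
    · obtain ⟨y, hy⟩ := he
      exact ⟨y, by simp; omega⟩
    · exfalso
      apply hn
      have h1 : n % 2 = 1 := Nat.odd_iff.mp ho
      simp [p0, h1]

lemma besselI1_eq (t : ℝ) : besselI 1 t = ∑' n : ℕ, p1 n * t ^ n := by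
  unfold besselI
  rw [← Function.Injective.tsum_eq (g := fun k : ℕ => 2 * k + 1)
      (fun a b h => by simp only at h; omega) (f := fun n => p1 n * t ^ n)]
  · refine tsum_congr fun k => ?_
    rw [p1_two_mul, div_pow]
    ring
  · intro n hn
    rcases Nat.even_or_odd n with he | ho
    · exfalso
      apply hn
      have h1 : n % 2 = 0 := Nat.even_iff.mp he
      simp [p1, h1]
    · obtain ⟨y, hy⟩ := ho
      exact ⟨y, by simp; omega⟩

/-! ### Summability -/

lemma choose_le_two_pow' (N k : ℕ) : N.choose k ≤ 2 ^ N := by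
  rcases le_or_gt k N with h | h
  · calc N.choose k ≤ ∑ i ∈ range (N + 1), N.choose i :=
          single_le_sum (fun i _ => Nat.zero_le _) (mem_range.2 (by omega))
    _ = 2 ^ N := Nat.sum_range_choose N
  · simp [Nat.choose_eq_zero_of_lt h]

lemma summable_norm_of_bound {f : ℕ → ℝ} (c : ℝ) (h : ∀ n, |f n| ≤ c ^ n / (Nat.factorial n : ℝ)) :
    Summable fun n => ‖f n‖ :=
  Summable.of_nonneg_of_le (fun n => norm_nonneg _) (fun n => h n)
    (Real.summable_pow_div_factorial c)

lemma p0_nonneg (n : ℕ) : 0 ≤ p0 n := by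
  unfold p0; split_ifs <;> positivity

lemma p1_nonneg (n : ℕ) : 0 ≤ p1 n := by
  unfold p1; split_ifs <;> positivity

lemma p0_le (n : ℕ) : p0 n ≤ 1 / (Nat.factorial n : ℝ) := by
  unfold p0
  split_ifs with h
  · obtain ⟨m, hm⟩ : ∃ m, n = 2 * m := ⟨n / 2, by omega⟩
    subst hm
    rw [Nat.mul_div_cancel_left _ (by norm_num)]
    rw [div_le_div_iff₀ (by positivity) (by positivity)]
    rw [one_mul, one_mul]
    have h1 : (2 * m).choose m * Nat.factorial m * Nat.factorial m = Nat.factorial (2 * m) := by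
      have := Nat.choose_mul_factorial_mul_factorial (show m ≤ 2 * m by omega)
      simpa [show 2 * m - m = m by omega] using this
    have h2 : (2 * m).choose m ≤ 2 ^ (2 * m) := choose_le_two_pow' _ _
    calc (Nat.factorial (2 * m) : ℝ) = ((2 * m).choose m : ℝ) * Nat.factorial m * Nat.factorial m := by
          exact_mod_cast h1.symm
      _ ≤ 2 ^ (2 * m) * Nat.factorial m * Nat.factorial m := by
          have h3 : ((2 * m).choose m : ℝ) ≤ 2 ^ (2 * m) := by exact_mod_cast h2
          have hf : (0 : ℝ) ≤ (Nat.factorial m : ℝ) := by positivity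
          exact mul_le_mul_of_nonneg_right (mul_le_mul_of_nonneg_right h3 hf) hf
      _ = 2 ^ (2 * m) * (Nat.factorial m : ℝ) ^ 2 := by ring
  · positivity

lemma p1_le (n : ℕ) : p1 n ≤ 1 / (Nat.factorial n : ℝ) := by
  unfold p1
  split_ifs with h
  · obtain ⟨m, hm⟩ : ∃ m, n = 2 * m + 1 := ⟨n / 2, by omega⟩
    subst hm
    rw [show (2 * m + 1) / 2 = m by omega]
    rw [div_le_div_iff₀ (by positivity) (by positivity)]
    rw [one_mul, one_mul]
    have h1 : (2 * m + 1).choose m * Nat.factorial m * Nat.factorial (m + 1) = Nat.factorial (2 * m + 1) := by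
      have := Nat.choose_mul_factorial_mul_factorial (show m ≤ 2 * m + 1 by omega)
      simpa [show 2 * m + 1 - m = m + 1 by omega] using this
    have h2 : (2 * m + 1).choose m ≤ 2 ^ (2 * m + 1) := choose_le_two_pow' _ _
    calc (Nat.factorial (2 * m + 1) : ℝ)
        = ((2 * m + 1).choose m : ℝ) * Nat.factorial m * Nat.factorial (m + 1) := by
          exact_mod_cast h1.symm
      _ ≤ 2 ^ (2 * m + 1) * Nat.factorial m * Nat.factorial (m + 1) := by
          have h3 : ((2 * m + 1).choose m : ℝ) ≤ 2 ^ (2 * m + 1) := by exact_mod_cast h2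
          have hf : (0 : ℝ) ≤ (Nat.factorial m : ℝ) := by positivity
          have hf2 : (0 : ℝ) ≤ (Nat.factorial (m + 1) : ℝ) := by positivity
          exact mul_le_mul_of_nonneg_right (mul_le_mul_of_nonneg_right h3 hf) hf2
      _ = 2 ^ (2 * m + 1) * (Nat.factorial m : ℝ) * (Nat.factorial (m + 1) : ℝ) := by ring
  · positivity

lemma cc_eq (n : ℕ) : cc n = ((2 * n).choose n : ℝ) / (2 ^ n * (Nat.factorial n : ℝ)) := by
  have h1 : (2 * n).choose n * Nat.factorial n * Nat.factorial n = Nat.factorial (2 * n) := by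
    have := Nat.choose_mul_factorial_mul_factorial (show n ≤ 2 * n by omega)
    simpa [show 2 * n - n = n by omega] using this
  have h1' : ((2 * n).choose n : ℝ) * Nat.factorial n * Nat.factorial n = Nat.factorial (2 * n) := by
    exact_mod_cast h1
  unfold cc
  rw [div_eq_div_iff (by positivity) (by positivity)]
  linear_combination (-(2 ^ n * (Nat.factorial n : ℝ))) * h1'

lemma cc_le (n : ℕ) : |cc n| ≤ 2 ^ n / (Nat.factorial n : ℝ) := by
  rw [cc_eq, abs_of_nonneg (by positivity)]
  rw [div_le_div_iff₀ (by positivity) (by positivity)]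
  have h2 : ((2 * n).choose n : ℝ) ≤ 2 ^ (2 * n) := by
    exact_mod_cast choose_le_two_pow' (2 * n) n
  have h3 : (2 : ℝ) ^ (2 * n) = 2 ^ n * 2 ^ n := by rw [two_mul, pow_add]
  have hf : (0:ℝ) ≤ (Nat.factorial n : ℝ) := by positivity
  calc ((2 * n).choose n : ℝ) * Nat.factorial n ≤ 2 ^ (2 * n) * Nat.factorial n :=
        mul_le_mul_of_nonneg_right h2 hf
    _ = 2 ^ n * (2 ^ n * Nat.factorial n) := by rw [h3]; ring

lemma bb_le (n : ℕ) : |bb n| ≤ 2 ^ n / (Nat.factorial n : ℝ) := by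
  unfold bb
  rw [abs_div, abs_mul, abs_pow, abs_neg, abs_one, one_pow, one_mul]
  rw [abs_of_nonneg (show (0:ℝ) ≤ ((2 * n).choose (n+1) : ℝ) by positivity),
      abs_of_nonneg (by positivity)]
  rw [div_le_div_iff₀ (by positivity) (by positivity)]
  have h2 : ((2 * n).choose (n + 1) : ℝ) ≤ 2 ^ (2 * n) := by
    exact_mod_cast choose_le_two_pow' (2 * n) (n + 1)
  have h3 : (2 : ℝ) ^ (2 * n) = 2 ^ n * 2 ^ n := by rw [two_mul, pow_add]
  have hf : (0:ℝ) ≤ (Nat.factorial n : ℝ) := by positivity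
  calc ((2 * n).choose (n + 1) : ℝ) * Nat.factorial n ≤ 2 ^ (2 * n) * Nat.factorial n :=
        mul_le_mul_of_nonneg_right h2 hf
    _ = 2 ^ n * (2 ^ n * Nat.factorial n) := by rw [h3]; ring

/-! ### Termwise coefficient identities -/

lemma T0 {n k : ℕ} (hk : k ≤ n) :
    (-1:ℝ)^k * p0 (n - k) / (Nat.factorial k : ℝ)
      = (-1)^n * (g0 n k : ℝ) / (2 ^ n * (Nat.factorial n : ℝ)) := by
  by_cases h : (n - k) % 2 = 0
  · obtain ⟨m, hm⟩ : ∃ m, n - k = 2 * m := ⟨(n - k) / 2, by omega⟩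
    have hn : n = k + 2 * m := by omega
    have hsign : ((-1:ℝ))^n = (-1)^k := by
      rw [hn, pow_add, pow_mul]; norm_num
    have hg : (g0 n k : ℝ) = (2 ^ k * n.choose k * ((2*m).choose m) : ℕ) := by
      unfold g0
      rw [if_pos h, hm, Nat.mul_div_cancel_left _ (by norm_num)]
    have hval : p0 (n - k) = 1 / (2 ^ (2*m) * (Nat.factorial m : ℝ) ^ 2) := by
      rw [hm, p0_two_mul]
    have hc1 : ((2*m).choose m : ℝ) * Nat.factorial m * Nat.factorial m
        = Nat.factorial (2*m) := by
      have := Nat.choose_mul_factorial_mul_factorial (show m ≤ 2*m by omega)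
      exact_mod_cast by simpa [show 2*m - m = m by omega] using this
    have hc2 : (n.choose k : ℝ) * Nat.factorial k * Nat.factorial (2*m)
        = Nat.factorial n := by
      have := Nat.choose_mul_factorial_mul_factorial hk
      rw [hm] at this
      exact_mod_cast this
    have hp : (2:ℝ)^k * 2^(2*m) = 2^n := by rw [← pow_add]; congr 1; omega
    rw [hsign, hval, hg]
    rw [mul_div_assoc, mul_div_assoc]
    congr 1
    rw [div_div, div_eq_div_iff (by positivity) (by positivity), one_mul]
    push_cast
    symm
    calc (2:ℝ)^k * (n.choose k : ℝ) * ((2*m).choose m : ℝ) * (2^(2*m) * (Nat.factorial m : ℝ)^2 * Nat.factorial k)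
        = (2^k * 2^(2*m)) * ((n.choose k : ℝ) * Nat.factorial k * (((2*m).choose m : ℝ) * Nat.factorial m * Nat.factorial m)) := by
          ring
      _ = 2^n * ((n.choose k : ℝ) * Nat.factorial k * Nat.factorial (2*m)) := by rw [hc1, hp]
      _ = 2^n * Nat.factorial n := by rw [hc2]
  · have hp0 : p0 (n - k) = 0 := by unfold p0; rw [if_neg h]
    have hg : g0 n k = 0 := by unfold g0; rw [if_neg h]
    rw [hp0, hg]
    simp

lemma T1 {n k : ℕ} (hk : k ≤ n) :
    (-1:ℝ)^k * p1 (n - k) / (Nat.factorial k : ℝ)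
      = (-1)^(n+1) * (g1 n k : ℝ) / (2 ^ n * (Nat.factorial n : ℝ)) := by
  by_cases h : (n - k) % 2 = 1
  · obtain ⟨m, hm⟩ : ∃ m, n - k = 2 * m + 1 := ⟨(n - k) / 2, by omega⟩
    have hn : n = k + 2 * m + 1 := by omega
    have hsign : ((-1:ℝ))^(n+1) = (-1)^k := by
      rw [show n + 1 = k + 2 * (m + 1) by omega, pow_add, pow_mul]; norm_num
    have hg : (g1 n k : ℝ) = (2 ^ k * n.choose k * ((2*m+1).choose m) : ℕ) := by
      unfold g1
      rw [if_pos h, hm, show (2*m+1)/2 = m by omega]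
    have hval : p1 (n - k)
        = 1 / (2 ^ (2*m+1) * (Nat.factorial m : ℝ) * (Nat.factorial (m+1) : ℝ)) := by
      rw [hm, p1_two_mul]
    have hc1 : ((2*m+1).choose m : ℝ) * Nat.factorial m * Nat.factorial (m+1)
        = Nat.factorial (2*m+1) := by
      have := Nat.choose_mul_factorial_mul_factorial (show m ≤ 2*m+1 by omega)
      exact_mod_cast by simpa [show 2*m+1 - m = m + 1 by omega] using this
    have hc2 : (n.choose k : ℝ) * Nat.factorial k * Nat.factorial (2*m+1)
        = Nat.factorial n := by
      have := Nat.choose_mul_factorial_mul_factorial hk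
      rw [hm] at this
      exact_mod_cast this
    have hp : (2:ℝ)^k * 2^(2*m+1) = 2^n := by rw [← pow_add]; congr 1; omega
    rw [hsign, hval, hg]
    rw [mul_div_assoc, mul_div_assoc]
    congr 1
    rw [div_div, div_eq_div_iff (by positivity) (by positivity), one_mul]
    push_cast
    symm
    calc (2:ℝ)^k * (n.choose k : ℝ) * ((2*m+1).choose m : ℝ) * (2^(2*m+1) * (Nat.factorial m : ℝ) * (Nat.factorial (m+1) : ℝ) * Nat.factorial k)
        = (2^k * 2^(2*m+1)) * ((n.choose k : ℝ) * Nat.factorial k * (((2*m+1).choose m : ℝ) * Nat.factorial m * Nat.factorial (m+1))) := by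
          ring
      _ = 2^n * ((n.choose k : ℝ) * Nat.factorial k * Nat.factorial (2*m+1)) := by rw [hc1, hp]
      _ = 2^n * Nat.factorial n := by rw [hc2]
  · have hp1 : p1 (n - k) = 0 := by unfold p1; rw [if_neg h]
    have hg : g1 n k = 0 := by unfold g1; rw [if_neg h]
    rw [hp1, hg]
    simp

lemma S0 (n : ℕ) :
    ∑ k ∈ range (n + 1), (-1:ℝ)^k * p0 (n - k) / (Nat.factorial k : ℝ) = aa n := by
  have h : ∀ k ∈ range (n + 1), (-1:ℝ)^k * p0 (n - k) / (Nat.factorial k : ℝ)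
      = (-1)^n * (g0 n k : ℝ) / (2 ^ n * (Nat.factorial n : ℝ)) := by
    intro k hk
    exact T0 (by simp only [mem_range] at hk; omega)
  rw [Finset.sum_congr rfl h]
  simp_rw [mul_div_assoc]
  rw [← Finset.mul_sum, ← Finset.sum_div, ← Nat.cast_sum, E0]
  rw [aa, cc_eq]

lemma S1 (n : ℕ) :
    ∑ k ∈ range (n + 1), (-1:ℝ)^k * p1 (n - k) / (Nat.factorial k : ℝ) = bb n := by
  have h : ∀ k ∈ range (n + 1), (-1:ℝ)^k * p1 (n - k) / (Nat.factorial k : ℝ)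
      = (-1)^(n+1) * (g1 n k : ℝ) / (2 ^ n * (Nat.factorial n : ℝ)) := by
    intro k hk
    exact T1 (by simp only [mem_range] at hk; omega)
  rw [Finset.sum_congr rfl h]
  simp_rw [mul_div_assoc]
  rw [← Finset.mul_sum, ← Finset.sum_div, ← Nat.cast_sum, E1]
  rw [bb, mul_div_assoc]

/-! ### Cauchy products -/

lemma inner0 (t : ℝ) (n : ℕ) :
    ∑ k ∈ range (n + 1), ((-t)^k / (Nat.factorial k : ℝ)) * (p0 (n - k) * t^(n - k))
      = aa n * t^n := by
  have h : ∀ k ∈ range (n + 1), ((-t)^k / (Nat.factorial k : ℝ)) * (p0 (n - k) * t^(n - k))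
      = ((-1:ℝ)^k * p0 (n - k) / (Nat.factorial k : ℝ)) * t^n := by
    intro k hk
    have hk' : k ≤ n := by simp only [mem_range] at hk; omega
    have ht : t^k * t^(n-k) = t^n := by rw [← pow_add]; congr 1; omega
    rw [neg_pow]
    calc ((-1:ℝ)^k * t^k / (Nat.factorial k : ℝ)) * (p0 (n - k) * t^(n - k))
        = ((-1:ℝ)^k * p0 (n - k) / (Nat.factorial k : ℝ)) * (t^k * t^(n-k)) := by ring
      _ = ((-1:ℝ)^k * p0 (n - k) / (Nat.factorial k : ℝ)) * t^n := by rw [ht]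
  rw [Finset.sum_congr rfl h, ← Finset.sum_mul, S0]

lemma inner1 (t : ℝ) (n : ℕ) :
    ∑ k ∈ range (n + 1), ((-t)^k / (Nat.factorial k : ℝ)) * (p1 (n - k) * t^(n - k))
      = bb n * t^n := by
  have h : ∀ k ∈ range (n + 1), ((-t)^k / (Nat.factorial k : ℝ)) * (p1 (n - k) * t^(n - k))
      = ((-1:ℝ)^k * p1 (n - k) / (Nat.factorial k : ℝ)) * t^n := by
    intro k hk
    have hk' : k ≤ n := by simp only [mem_range] at hk; omega
    have ht : t^k * t^(n-k) = t^n := by rw [← pow_add]; congr 1; omega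
    rw [neg_pow]
    calc ((-1:ℝ)^k * t^k / (Nat.factorial k : ℝ)) * (p1 (n - k) * t^(n - k))
        = ((-1:ℝ)^k * p1 (n - k) / (Nat.factorial k : ℝ)) * (t^k * t^(n-k)) := by ring
      _ = ((-1:ℝ)^k * p1 (n - k) / (Nat.factorial k : ℝ)) * t^n := by rw [ht]
  rw [Finset.sum_congr rfl h, ← Finset.sum_mul, S1]

lemma sumexp (t : ℝ) : Summable fun n => ‖(-t)^n / (Nat.factorial n : ℝ)‖ := by
  apply summable_norm_of_bound |t|
  intro n
  rw [abs_div, abs_pow, abs_neg, Nat.abs_cast]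

lemma sump0 (t : ℝ) : Summable fun n => ‖p0 n * t^n‖ := by
  apply summable_norm_of_bound |t|
  intro n
  rw [abs_mul, abs_pow, abs_of_nonneg (p0_nonneg n)]
  calc p0 n * |t|^n ≤ (1 / (Nat.factorial n : ℝ)) * |t|^n :=
        mul_le_mul_of_nonneg_right (p0_le n) (by positivity)
    _ = |t|^n / (Nat.factorial n : ℝ) := by ring

lemma sump1 (t : ℝ) : Summable fun n => ‖p1 n * t^n‖ := by
  apply summable_norm_of_bound |t|
  intro n
  rw [abs_mul, abs_pow, abs_of_nonneg (p1_nonneg n)]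
  calc p1 n * |t|^n ≤ (1 / (Nat.factorial n : ℝ)) * |t|^n :=
        mul_le_mul_of_nonneg_right (p1_le n) (by positivity)
    _ = |t|^n / (Nat.factorial n : ℝ) := by ring

lemma expI0 (t : ℝ) : Real.exp (-t) * besselI 0 t = ∑' n : ℕ, aa n * t^n := by
  have hexp : Real.exp (-t) = ∑' n : ℕ, (-t)^n / (Nat.factorial n : ℝ) := by
    rw [Real.exp_eq_exp_ℝ, NormedSpace.exp_eq_tsum_div]
  rw [hexp, besselI0_eq, tsum_mul_tsum_eq_tsum_sum_range_of_summable_norm (sumexp t) (sump0 t)]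
  exact tsum_congr (inner0 t)

lemma expI1 (t : ℝ) : Real.exp (-t) * besselI 1 t = ∑' n : ℕ, bb n * t^n := by
  have hexp : Real.exp (-t) = ∑' n : ℕ, (-t)^n / (Nat.factorial n : ℝ) := by
    rw [Real.exp_eq_exp_ℝ, NormedSpace.exp_eq_tsum_div]
  rw [hexp, besselI1_eq, tsum_mul_tsum_eq_tsum_sum_range_of_summable_norm (sumexp t) (sump1 t)]
  exact tsum_congr (inner1 t)

/-! ### The scalar recurrence -/

lemma hkey (j : ℕ) : ((j:ℝ)+1) * cc (j+1)
    = ((2*j+1).choose (j+1) : ℝ) / (2^j * (Nat.factorial j : ℝ)) := by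
  have hc : ((2*j+1).choose (j+1) : ℝ) * Nat.factorial (j+1) * Nat.factorial j
      = Nat.factorial (2*j+1) := by
    have := Nat.choose_mul_factorial_mul_factorial (show j+1 ≤ 2*j+1 by omega)
    exact_mod_cast by simpa [show 2*j+1 - (j+1) = j by omega] using this
  have hf1 : (Nat.factorial (2*(j+1)) : ℝ) = (2*(j:ℝ)+2) * Nat.factorial (2*j+1) := by
    rw [show 2*(j+1) = (2*j+1) + 1 by omega, Nat.factorial_succ]
    push_cast
    ring
  have hf2 : (Nat.factorial (j+1) : ℝ) = ((j:ℝ)+1) * Nat.factorial j := by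
    rw [Nat.factorial_succ]
    push_cast
    ring
  unfold cc
  rw [hf1, ← mul_div_assoc, div_eq_div_iff (by positivity) (by positivity)]
  rw [hf2] at hc ⊢
  rw [pow_succ]
  linear_combination (-(2 * 2^j * ((j:ℝ)+1)^2 * (Nat.factorial j : ℝ))) * hc

lemma COMB (j : ℕ) :
    (((j:ℝ)+1)+1) * (-1:ℝ)^(j+1) * cc (j+1) = aa (j+1) + (bb j - aa j) := by
  have hP : ((2*j+1).choose (j+1) : ℝ) = ((2*j).choose j : ℝ) + ((2*j).choose (j+1) : ℝ) := by
    exact_mod_cast congrArg (Nat.cast (R := ℝ)) (Nat.choose_succ_succ (2*j) j)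
  have hk := hkey j
  rw [aa, aa, bb, cc_eq j]
  rw [pow_succ] at *
  linear_combination ((-1:ℝ))^j * (-1) * hk + ((-1:ℝ))^j * (-1) / (2^j * (Nat.factorial j : ℝ)) * hP

end D1Aux

open D1Aux in
set_option maxHeartbeats 1000000 in
/-- Lemma: -(1/4) Σ_{k=1}^∞ (k+1)(-1)^k ((2k-1)!!/(k!)²)(α²/2)^k
  = 1/4 + (1/8)e^{-α²/2}[(α² - 2)I₀(α²/2) - α² I₁(α²/2)].
(The sum over k ≥ 1 is written via the shift k ↦ j+1.) -/
theorem d1_bessel (α : ℝ) :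
    -(1/4) * ∑' j : ℕ, (((j:ℝ)+1)+1) * (-1:ℝ)^(j+1)
        * (oddDF (j+1) / ((Nat.factorial (j+1) : ℝ))^2) * (α^2/2)^(j+1)
      = 1/4 + (1/8) * Real.exp (-α^2/2)
          * ((α^2 - 2) * besselI 0 (α^2/2) - α^2 * besselI 1 (α^2/2)) := by
  set t : ℝ := α^2/2 with ht
  have hfa : Summable fun n : ℕ => aa n * t^n := by
    apply Summable.of_norm
    apply summable_norm_of_bound (2*|t|)
    intro n
    rw [abs_mul, abs_pow]
    have h1 : |aa n| = |cc n| := by rw [aa, abs_mul, abs_pow, abs_neg, abs_one, one_pow, one_mul]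
    rw [h1]
    calc |cc n| * |t|^n ≤ (2^n / (Nat.factorial n : ℝ)) * |t|^n :=
          mul_le_mul_of_nonneg_right (cc_le n) (by positivity)
      _ = (2*|t|)^n / (Nat.factorial n : ℝ) := by rw [mul_pow]; ring
  have hfb : Summable fun n : ℕ => bb n * t^n := by
    apply Summable.of_norm
    apply summable_norm_of_bound (2*|t|)
    intro n
    rw [abs_mul, abs_pow]
    calc |bb n| * |t|^n ≤ (2^n / (Nat.factorial n : ℝ)) * |t|^n :=
          mul_le_mul_of_nonneg_right (bb_le n) (by positivity)
      _ = (2*|t|)^n / (Nat.factorial n : ℝ) := by rw [mul_pow]; ring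
  have hsa : Summable fun j : ℕ => aa (j+1) * t^(j+1) := (summable_nat_add_iff 1).2 hfa
  have hsb : Summable fun j : ℕ => (bb j - aa j) * t^(j+1) := by
    apply Summable.congr (((hfb.mul_left t).sub (hfa.mul_left t)))
    intro j
    ring
  have hterm : ∀ j : ℕ, (((j:ℝ)+1)+1) * (-1:ℝ)^(j+1)
      * (oddDF (j+1) / ((Nat.factorial (j+1) : ℝ))^2) * t^(j+1)
      = aa (j+1) * t^(j+1) + (bb j - aa j) * t^(j+1) := by
    intro j
    have hoc : oddDF (j+1) / ((Nat.factorial (j+1) : ℝ))^2 = cc (j+1) := by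
      unfold oddDF cc
      rw [div_div]
      congr 1
      ring
    rw [hoc]
    calc (((j:ℝ)+1)+1) * (-1:ℝ)^(j+1) * cc (j+1) * t^(j+1)
        = (aa (j+1) + (bb j - aa j)) * t^(j+1) := by rw [COMB j]
      _ = aa (j+1) * t^(j+1) + (bb j - aa j) * t^(j+1) := by ring
  rw [tsum_congr hterm, Summable.tsum_add hsa hsb]
  have hA : ∑' j : ℕ, aa (j+1) * t^(j+1) = (∑' n : ℕ, aa n * t^n) - 1 := by
    have h0 := Summable.tsum_eq_zero_add hfa
    have ha0 : aa 0 * t^0 = 1 := by simp [aa, cc, Nat.factorial]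
    rw [h0, ha0]
    ring
  have hB : ∑' j : ℕ, (bb j - aa j) * t^(j+1)
      = t * (∑' n : ℕ, bb n * t^n) - t * (∑' n : ℕ, aa n * t^n) := by
    have h1 : ∀ j : ℕ, (bb j - aa j) * t^(j+1) = t * (bb j * t^j) - t * (aa j * t^j) := by
      intro j; ring
    rw [tsum_congr h1, Summable.tsum_sub (hfb.mul_left t) (hfa.mul_left t), tsum_mul_left, tsum_mul_left]
  rw [hA, hB, ← expI0 t, ← expI1 t]
  have hα : α^2 = 2*t := by rw [ht]; ring
  have hexp : -α^2/2 = -t := by rw [ht]; ring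
  rw [hexp, hα]
  ring
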